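/- (Prompt-shift risk gap.) Let 𝓓, Q_g, Q_b be probability measures on ℝ^d, let f_T : ℝ^d → ℝ^m and φ̃ : ℝ^d → ℝ^r be measurable with ‖f_T(x)‖ ≤ M_T and ‖φ̃(x)‖ ≤ M_φ holding almost everywhere under each of 𝓓, Q_g and Q_b. Let η > 0 and define the one-step distilled weights W_g := 2η 𝔼_{x∼Q_g}[ f_T(x) φ̃(x)ᵀ ] and W_b := 2η 𝔼_{x∼Q_b}[ f_T(x) φ̃(x)ᵀ ], and the target-domain distillation risk L_𝓓(W) = 𝔼_{x∼𝓓}[ ‖W φ̃(x) − f_T(x)‖² ]. Suppose δ ≥ 0 satisfies ‖𝔼_{x∼Q_b}[ f_T(x) φ̃(x)ᵀ ] − 𝔼_{x∼Q_g}[ f_T(x) φ̃(x)ᵀ ]‖_F ≤ M_T M_φ δ. Then L_𝓓(W_b) − L_𝓓(W_g) ≤ 4 η² M_T² M_φ⁴ δ² + 4 η M_T² M_φ² (1 + 2η M_φ²) δ. -/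

import Mathlib

open scoped BigOperators
open MeasureTheory

/-- The output `W v` of an `m × r` weight matrix on a feature vector `v ∈ ℝ^r`. -/
noncomputable def matApply {m r : ℕ} (W : Matrix (Fin m) (Fin r) ℝ)
    (v : EuclideanSpace ℝ (Fin r)) : EuclideanSpace ℝ (Fin m) :=
  WithLp.toLp 2 (fun a => ∑ s, W a s * v s)

/-- The Frobenius norm of a real matrix. -/
noncomputable def frobNorm {m r : ℕ} (A : Matrix (Fin m) (Fin r) ℝ) : ℝ :=
  Real.sqrt (∑ a, ∑ s, (A a s) ^ 2)

/-!
Write `W_b φ − f = u + v` with `u = (W_b − W_g) φ` and `v = W_g φ − f`. Pointwise the risk gap is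
`‖u + v‖² − ‖v‖² = ‖u‖² + 2⟪u, v⟫ ≤ ‖u‖² + 2‖u‖‖v‖`, where `‖u‖ ≤ ‖W_b − W_g‖_F M_φ ≤ 2η M_T M_φ² δ`
and `‖v‖ ≤ ‖W_g‖_F M_φ + M_T ≤ 2η M_T M_φ² + M_T`; the last step uses `‖𝔼[f φᵀ]‖_F ≤ M_T M_φ`.
-/

section Frobenius

variable {m r : ℕ}

lemma frobNorm_nonneg (A : Matrix (Fin m) (Fin r) ℝ) : 0 ≤ frobNorm A :=
  Real.sqrt_nonneg _

lemma frobNorm_sq (A : Matrix (Fin m) (Fin r) ℝ) : frobNorm A ^ 2 = ∑ a, ∑ s, A a s ^ 2 :=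
  Real.sq_sqrt (by positivity)

lemma frobNorm_smul (c : ℝ) (A : Matrix (Fin m) (Fin r) ℝ) :
    frobNorm (c • A) = |c| * frobNorm A := by
  have hsum : ∑ a, ∑ s, (c • A) a s ^ 2 = c ^ 2 * ∑ a, ∑ s, A a s ^ 2 := by
    simp only [Matrix.smul_apply, smul_eq_mul, mul_pow, Finset.mul_sum]
  rw [frobNorm, hsum, Real.sqrt_mul (sq_nonneg c), Real.sqrt_sq_eq_abs, frobNorm]

lemma matApply_eq_toEuclideanLin (W : Matrix (Fin m) (Fin r) ℝ) (v : EuclideanSpace ℝ (Fin r)) :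
    matApply W v = Matrix.toEuclideanLin W v :=
  rfl

lemma matApply_sub (W W' : Matrix (Fin m) (Fin r) ℝ) (v : EuclideanSpace ℝ (Fin r)) :
    matApply (W - W') v = matApply W v - matApply W' v := by
  simp [matApply_eq_toEuclideanLin]

lemma norm_matApply_le (A : Matrix (Fin m) (Fin r) ℝ) (v : EuclideanSpace ℝ (Fin r)) :
    ‖matApply A v‖ ≤ frobNorm A * ‖v‖ := by
  refine (pow_le_pow_iff_left₀ (norm_nonneg _) (by positivity [frobNorm_nonneg A])
    two_ne_zero).1 ?_
  rw [mul_pow, frobNorm_sq, EuclideanSpace.real_norm_sq_eq, EuclideanSpace.real_norm_sq_eq,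
    Finset.sum_mul]
  exact Finset.sum_le_sum fun a _ => by
    simpa [matApply] using Finset.sum_mul_sq_le_sq_mul_sq Finset.univ (A a) v.ofLp

lemma inner_matApply (A : Matrix (Fin m) (Fin r) ℝ) (u : EuclideanSpace ℝ (Fin m))
    (v : EuclideanSpace ℝ (Fin r)) :
    inner ℝ u (matApply A v) = ∑ a, ∑ s, A a s * (u a * v s) := by
  simp only [matApply, PiLp.inner_apply, RCLike.inner_apply, conj_trivial, Finset.sum_mul]
  exact Finset.sum_congr rfl fun a _ => Finset.sum_congr rfl fun s _ => by ring

lemma norm_residual_le (W : Matrix (Fin m) (Fin r) ℝ) {v : EuclideanSpace ℝ (Fin r)}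
    {y : EuclideanSpace ℝ (Fin m)} {Mφ MT : ℝ} (hv : ‖v‖ ≤ Mφ) (hy : ‖y‖ ≤ MT) :
    ‖matApply W v - y‖ ≤ frobNorm W * Mφ + MT :=
  (norm_sub_le _ _).trans <|
    add_le_add ((norm_matApply_le W v).trans (mul_le_mul_of_nonneg_left hv (frobNorm_nonneg W))) hy

end Frobenius

lemma norm_add_sq_sub_norm_sq_le {E : Type*} [NormedAddCommGroup E] [InnerProductSpace ℝ E]
    {u v : E} {a b : ℝ} (hu : ‖u‖ ≤ a) (hv : ‖v‖ ≤ b) :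
    ‖u + v‖ ^ 2 - ‖v‖ ^ 2 ≤ a ^ 2 + 2 * a * b := by
  have hcs := real_inner_le_norm u v
  rw [norm_add_sq_real]
  nlinarith [norm_nonneg u, norm_nonneg v]

noncomputable def distillRisk {X : Type*} [MeasurableSpace X] {m r : ℕ} (μ : Measure X)
    (f : X → EuclideanSpace ℝ (Fin m)) (φ : X → EuclideanSpace ℝ (Fin r))
    (W : Matrix (Fin m) (Fin r) ℝ) : ℝ :=
  ∫ x, ‖matApply W (φ x) - f x‖ ^ 2 ∂μ

section Expectations

variable {X : Type*} [MeasurableSpace X] {μ : Measure X} {m r : ℕ}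
  {f : X → EuclideanSpace ℝ (Fin m)} {φ : X → EuclideanSpace ℝ (Fin r)} {MT Mφ : ℝ}

lemma integrable_coord_mul_coord [IsFiniteMeasure μ] (hf : Measurable f) (hφ : Measurable φ)
    (hMT : ∀ᵐ x ∂μ, ‖f x‖ ≤ MT) (hMφ : ∀ᵐ x ∂μ, ‖φ x‖ ≤ Mφ) (a : Fin m) (s : Fin r) :
    Integrable (fun x => f x a * φ x s) μ := by
  refine .of_bound (by fun_prop : Measurable fun x => f x a * φ x s).aestronglyMeasurable
    (MT * Mφ) ?_
  filter_upwards [hMT, hMφ] with x hfx hφx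
  rw [norm_mul]
  exact mul_le_mul ((PiLp.norm_apply_le _ a).trans hfx) ((PiLp.norm_apply_le _ s).trans hφx)
    (norm_nonneg _) ((norm_nonneg _).trans hfx)

/-- `A = 𝔼[f φᵀ]` is tested against itself: `‖A‖_F² = 𝔼 ⟪f, A φ⟫ ≤ ‖A‖_F M_T M_φ`. -/
lemma frobNorm_le_of_eq_integral [IsProbabilityMeasure μ] (hf : Measurable f)
    (hφ : Measurable φ) (hMT : ∀ᵐ x ∂μ, ‖f x‖ ≤ MT) (hMφ : ∀ᵐ x ∂μ, ‖φ x‖ ≤ Mφ)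
    (A : Matrix (Fin m) (Fin r) ℝ) (hA : ∀ a s, A a s = ∫ x, f x a * φ x s ∂μ) :
    frobNorm A ≤ MT * Mφ := by
  obtain ⟨x₀, hfx₀, hφx₀⟩ := (hMT.and hMφ).exists
  have hC : 0 ≤ MT * Mφ :=
    mul_nonneg ((norm_nonneg _).trans hfx₀) ((norm_nonneg _).trans hφx₀)
  have hint : ∀ a s, Integrable (fun x => A a s * (f x a * φ x s)) μ := fun a s =>
    (integrable_coord_mul_coord hf hφ hMT hMφ a s).const_mul _
  have hsq : frobNorm A ^ 2 = ∫ x, inner ℝ (f x) (matApply A (φ x)) ∂μ :=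
    calc frobNorm A ^ 2 = ∑ a, ∑ s, ∫ x, A a s * (f x a * φ x s) ∂μ := by
          rw [frobNorm_sq]
          simp only [integral_const_mul, ← hA, sq]
      _ = ∫ x, ∑ a, ∑ s, A a s * (f x a * φ x s) ∂μ := by
          rw [integral_finsetSum _ fun a _ => integrable_finsetSum _ fun s _ => hint a s]
          exact Finset.sum_congr rfl fun a _ => (integral_finsetSum _ fun s _ => hint a s).symm
      _ = ∫ x, inner ℝ (f x) (matApply A (φ x)) ∂μ := by simp only [inner_matApply]
  have hinner : ∀ᵐ x ∂μ, ‖inner ℝ (f x) (matApply A (φ x))‖ ≤ frobNorm A * (MT * Mφ) := by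
    filter_upwards [hMT, hMφ] with x hfx hφx
    calc ‖inner ℝ (f x) (matApply A (φ x))‖ ≤ ‖f x‖ * ‖matApply A (φ x)‖ := norm_inner_le_norm _ _
      _ ≤ MT * (frobNorm A * Mφ) :=
          mul_le_mul hfx ((norm_matApply_le A _).trans
            (mul_le_mul_of_nonneg_left hφx (frobNorm_nonneg A))) (norm_nonneg _)
            ((norm_nonneg _).trans hfx)
      _ = frobNorm A * (MT * Mφ) := by ring
  have hbound : frobNorm A ^ 2 ≤ frobNorm A * (MT * Mφ) :=
    calc frobNorm A ^ 2 ≤ ‖∫ x, inner ℝ (f x) (matApply A (φ x)) ∂μ‖ := hsq ▸ Real.le_norm_self _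
      _ ≤ frobNorm A * (MT * Mφ) := by simpa using norm_integral_le_of_norm_le_const hinner
  nlinarith [frobNorm_nonneg A]

lemma integrable_sq_norm_residual [IsFiniteMeasure μ] (hf : Measurable f) (hφ : Measurable φ)
    (hMT : ∀ᵐ x ∂μ, ‖f x‖ ≤ MT) (hMφ : ∀ᵐ x ∂μ, ‖φ x‖ ≤ Mφ) (W : Matrix (Fin m) (Fin r) ℝ) :
    Integrable (fun x => ‖matApply W (φ x) - f x‖ ^ 2) μ := by
  have hmeas : Measurable fun x => matApply W (φ x) :=
    (Matrix.toEuclideanLin W).continuous_of_finiteDimensional.measurable.comp hφ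
  refine .of_bound ((hmeas.sub hf).norm.pow_const 2).aestronglyMeasurable
    ((frobNorm W * Mφ + MT) ^ 2) ?_
  filter_upwards [hMT, hMφ] with x hfx hφx
  rw [norm_pow, norm_norm]
  exact pow_le_pow_left₀ (norm_nonneg _) (norm_residual_le W hφx hfx) 2

lemma distillRisk_sub_le [IsProbabilityMeasure μ] (hf : Measurable f) (hφ : Measurable φ)
    (hMT : ∀ᵐ x ∂μ, ‖f x‖ ≤ MT) (hMφ : ∀ᵐ x ∂μ, ‖φ x‖ ≤ Mφ) (W W' : Matrix (Fin m) (Fin r) ℝ) :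
    distillRisk μ f φ W' - distillRisk μ f φ W
      ≤ (frobNorm (W' - W) * Mφ) ^ 2 + 2 * (frobNorm (W' - W) * Mφ) * (frobNorm W * Mφ + MT) := by
  have hint := integrable_sq_norm_residual hf hφ hMT hMφ
  have hpointwise : ∀ᵐ x ∂μ, ‖matApply W' (φ x) - f x‖ ^ 2 - ‖matApply W (φ x) - f x‖ ^ 2
      ≤ (frobNorm (W' - W) * Mφ) ^ 2 + 2 * (frobNorm (W' - W) * Mφ) * (frobNorm W * Mφ + MT) := by
    filter_upwards [hMT, hMφ] with x hfx hφx
    have hsplit : matApply W' (φ x) - f x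
        = matApply (W' - W) (φ x) + (matApply W (φ x) - f x) := by
      rw [matApply_sub]; abel
    rw [hsplit]
    exact norm_add_sq_sub_norm_sq_le ((norm_matApply_le _ _).trans
      (mul_le_mul_of_nonneg_left hφx (frobNorm_nonneg _))) (norm_residual_le W hφx hfx)
  rw [distillRisk, distillRisk, ← integral_sub (hint W') (hint W)]
  simpa using integral_mono_ae ((hint W').sub (hint W)) (integrable_const _) hpointwise

end Expectations

theorem prompt_shift_risk_gap_general (d m r : ℕ)
    (𝓓 Qg : Measure (EuclideanSpace ℝ (Fin d)))
    [IsProbabilityMeasure 𝓓] [IsProbabilityMeasure Qg]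
    (fT : EuclideanSpace ℝ (Fin d) → EuclideanSpace ℝ (Fin m)) (hfT : Measurable fT)
    (φt : EuclideanSpace ℝ (Fin d) → EuclideanSpace ℝ (Fin r)) (hφt : Measurable φt)
    (MT Mφ : ℝ)
    (hMTD : ∀ᵐ x ∂𝓓, ‖fT x‖ ≤ MT) (hMφD : ∀ᵐ x ∂𝓓, ‖φt x‖ ≤ Mφ)
    (hMTg : ∀ᵐ x ∂Qg, ‖fT x‖ ≤ MT) (hMφg : ∀ᵐ x ∂Qg, ‖φt x‖ ≤ Mφ)
    (η : ℝ) (hη : 0 < η)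
    (Ag Ab : Matrix (Fin m) (Fin r) ℝ)
    (hAg : ∀ a s, Ag a s = ∫ x, fT x a * φt x s ∂Qg)
    (Wg Wb : Matrix (Fin m) (Fin r) ℝ)
    (hWg : Wg = (2 * η) • Ag) (hWb : Wb = (2 * η) • Ab)
    (δ : ℝ)
    (hδ : frobNorm (Ab - Ag) ≤ MT * Mφ * δ) :
    (∫ x, ‖matApply Wb (φt x) - fT x‖ ^ 2 ∂𝓓) - (∫ x, ‖matApply Wg (φt x) - fT x‖ ^ 2 ∂𝓓)
      ≤ 4 * η ^ 2 * MT ^ 2 * Mφ ^ 4 * δ ^ 2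
        + 4 * η * MT ^ 2 * Mφ ^ 2 * (1 + 2 * η * Mφ ^ 2) * δ := by
  obtain ⟨x₀, hfx₀, hφx₀⟩ := (hMTD.and hMφD).exists
  have hMT : 0 ≤ MT := (norm_nonneg _).trans hfx₀
  have hMφ : 0 ≤ Mφ := (norm_nonneg _).trans hφx₀
  have hWgF : frobNorm Wg ≤ 2 * η * (MT * Mφ) := by
    rw [hWg, frobNorm_smul, abs_of_pos (by positivity)]
    gcongr
    exact frobNorm_le_of_eq_integral hfT hφt hMTg hMφg Ag hAg
  have hΔF : frobNorm (Wb - Wg) ≤ 2 * η * (MT * Mφ * δ) := by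
    rw [hWg, hWb, ← smul_sub, frobNorm_smul, abs_of_pos (by positivity)]
    gcongr
  calc distillRisk 𝓓 fT φt Wb - distillRisk 𝓓 fT φt Wg
      ≤ (frobNorm (Wb - Wg) * Mφ) ^ 2
          + 2 * (frobNorm (Wb - Wg) * Mφ) * (frobNorm Wg * Mφ + MT) :=
        distillRisk_sub_le hfT hφt hMTD hMφD Wg Wb
    _ ≤ (2 * η * (MT * Mφ * δ) * Mφ) ^ 2
          + 2 * (2 * η * (MT * Mφ * δ) * Mφ) * (2 * η * (MT * Mφ) * Mφ + MT) := by
        have hΔ0 := frobNorm_nonneg (Wb - Wg)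
        have hWg0 := frobNorm_nonneg Wg
        gcongr
        exact mul_nonneg zero_le_two (mul_nonneg ((frobNorm_nonneg _).trans hΔF) hMφ)
    _ = _ := by ring

/-- **Prompt-shift risk gap.**
Let `W_g = 2η 𝔼_{Q_g}[f_T(x) φ̃(x)ᵀ]` and `W_b = 2η 𝔼_{Q_b}[f_T(x) φ̃(x)ᵀ]` be the one-step
distilled weights of a good and a bad prompt distribution, and let
`L_𝓓(W) = 𝔼_𝓓 ‖W φ̃(x) − f_T(x)‖²` be the target-domain distillation risk.  If `δ ≥ 0`
satisfies `‖𝔼_{Q_b}[f_T φ̃ᵀ] − 𝔼_{Q_g}[f_T φ̃ᵀ]‖_F ≤ M_T M_φ δ`, then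
`L_𝓓(W_b) − L_𝓓(W_g) ≤ 4η² M_T² M_φ⁴ δ² + 4η M_T² M_φ² (1 + 2η M_φ²) δ`. -/
theorem prompt_shift_risk_gap (d m r : ℕ)
    (𝓓 Qg Qb : Measure (EuclideanSpace ℝ (Fin d)))
    [IsProbabilityMeasure 𝓓] [IsProbabilityMeasure Qg] [IsProbabilityMeasure Qb]
    (fT : EuclideanSpace ℝ (Fin d) → EuclideanSpace ℝ (Fin m)) (hfT : Measurable fT)
    (φt : EuclideanSpace ℝ (Fin d) → EuclideanSpace ℝ (Fin r)) (hφt : Measurable φt)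
    (MT Mφ : ℝ)
    (hMTD : ∀ᵐ x ∂𝓓, ‖fT x‖ ≤ MT) (hMφD : ∀ᵐ x ∂𝓓, ‖φt x‖ ≤ Mφ)
    (hMTg : ∀ᵐ x ∂Qg, ‖fT x‖ ≤ MT) (hMφg : ∀ᵐ x ∂Qg, ‖φt x‖ ≤ Mφ)
    (hMTb : ∀ᵐ x ∂Qb, ‖fT x‖ ≤ MT) (hMφb : ∀ᵐ x ∂Qb, ‖φt x‖ ≤ Mφ)
    (η : ℝ) (hη : 0 < η)
    (Ag Ab : Matrix (Fin m) (Fin r) ℝ)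
    (hAg : ∀ a s, Ag a s = ∫ x, fT x a * φt x s ∂Qg)
    (hAb : ∀ a s, Ab a s = ∫ x, fT x a * φt x s ∂Qb)
    (Wg Wb : Matrix (Fin m) (Fin r) ℝ)
    (hWg : Wg = (2 * η) • Ag) (hWb : Wb = (2 * η) • Ab)
    (δ : ℝ) (hδ0 : 0 ≤ δ)
    (hδ : frobNorm (Ab - Ag) ≤ MT * Mφ * δ) :
    (∫ x, ‖matApply Wb (φt x) - fT x‖ ^ 2 ∂𝓓) - (∫ x, ‖matApply Wg (φt x) - fT x‖ ^ 2 ∂𝓓)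
      ≤ 4 * η ^ 2 * MT ^ 2 * Mφ ^ 4 * δ ^ 2
        + 4 * η * MT ^ 2 * Mφ ^ 2 * (1 + 2 * η * Mφ ^ 2) * δ :=
  prompt_shift_risk_gap_general d m r 𝓓 Qg fT hfT φt hφt MT Mφ hMTD hMφD hMTg hMφg η hη Ag Ab hAg Wg
    Wb hWg hWb δ hδ
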